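/- arXiv:2510.10721 — 6 statements merged into one kernel-verified Lean document; each statement's English description precedes it below -/
import Mathlib

section
/- Let a, b be nonzero integers, let k ≥ 2 be an integer, and let η be a nonzero complex number. Then there exists a multiplicative function f : ℕ → ℂ (namely one with f(p) = 1 for every prime p dividing L_k and f(p) = η^{-1}·S(a,b;pL_k) for every prime p not dividing L_k) such that for all real X ≥ 1, the number of squarefree integers n ≤ X with exactly k prime factors satisfying S(a,b;n) = η·f(n) is at least π(X/L_k) − k + 1. In particular, the upper bound π(X/L_k) + 7(|a|+|b|+√k)X^{1−1/(2k)} is sharp up to the error term. -/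
/-- `e(t) = exp(2πit)`. -/
noncomputable def eC (t : ℂ) : ℂ := Complex.exp (2 * Real.pi * Complex.I * t)

/-- The Kloosterman sum `S(a,b;c) = Σ_{x mod c, (x,c)=1} e((ax + b x̄)/c)`. -/
noncomputable def kloos (a b : ℤ) (c : ℕ) : ℂ :=
  ∑ x ∈ Finset.range c,
    if Nat.gcd x c = 1 then
      eC (((a : ℂ) * (x : ℂ) + (b : ℂ) * (((x : ZMod c)⁻¹).val : ℂ)) / (c : ℂ))
    else 0

/-- `π(X)`: the number of primes `≤ X`. -/
noncomputable def primesLe (X : ℝ) : ℕ := Set.ncard {p : ℕ | p.Prime ∧ (p : ℝ) ≤ X}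

/-- `L_k`: the product of the first `k - 1` primes. -/
noncomputable def Lk (k : ℕ) : ℕ := ∏ i ∈ Finset.range (k - 1), Nat.nth Nat.Prime i

/-!
For a prime `p ∤ L_k`, the integer `p L_k` is squarefree with exactly `k` prime factors, and
since `f` is `1` on the primes dividing `L_k`, multiplicativity gives `η f(p L_k) = S(a,b; p L_k)`.
So `p ↦ p L_k` injects the primes `p ≤ X / L_k` not dividing `L_k` into the counted set, and at
most `ω(L_k) = k - 1` primes are lost.
-/

open ArithmeticFunction

lemma Lk_eq_prod_image (k : ℕ) :
    Lk k = ∏ p ∈ (Finset.range (k - 1)).image (Nat.nth Nat.Prime), p := by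
  rw [Lk, Finset.prod_image fun i _ j _ h => Nat.nth_injective Nat.infinite_setOfPred_prime h]

lemma primeFactors_Lk (k : ℕ) :
    (Lk k).primeFactors = (Finset.range (k - 1)).image (Nat.nth Nat.Prime) := by
  rw [Lk_eq_prod_image]
  exact Nat.primeFactors_prod fun p hp => by
    obtain ⟨i, -, rfl⟩ := Finset.mem_image.mp hp
    exact Nat.prime_nth_prime i

lemma card_primeFactors_Lk (k : ℕ) : (Lk k).primeFactors.card = k - 1 := by
  rw [primeFactors_Lk, Finset.card_image_of_injective _
    (Nat.nth_injective Nat.infinite_setOfPred_prime), Finset.card_range]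

lemma squarefree_Lk (k : ℕ) : Squarefree (Lk k) := by
  refine Finset.squarefree_prod_of_pairwise_isCoprime (fun i _ j _ hij => ?_)
    fun i _ => (Nat.prime_nth_prime i).prime.squarefree
  rw [Function.onFun, ← Nat.coprime_iff_isRelPrime, Nat.coprime_primes
    (Nat.prime_nth_prime i) (Nat.prime_nth_prime j)]
  exact fun h => hij (Nat.nth_injective Nat.infinite_setOfPred_prime h)

noncomputable def kloosModel (a b : ℤ) (L : ℕ) (η : ℂ) : ArithmeticFunction ℂ :=
  prodPrimeFactors fun p => if p ∣ L then 1 else η⁻¹ * kloos a b (p * L)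

section kloosModel

variable (a b : ℤ) {L : ℕ} (η : ℂ)

lemma isMultiplicative_kloosModel : IsMultiplicative (kloosModel a b L η) :=
  IsMultiplicative.prodPrimeFactors _

lemma kloosModel_apply_prime {p : ℕ} (hp : p.Prime) :
    kloosModel a b L η p = if p ∣ L then 1 else η⁻¹ * kloos a b (p * L) := by
  rw [kloosModel, prodPrimeFactors_apply hp.ne_zero, hp.primeFactors, Finset.prod_singleton]

lemma kloosModel_apply_self (hL : L ≠ 0) : kloosModel a b L η L = 1 := by
  rw [kloosModel, prodPrimeFactors_apply hL]
  exact Finset.prod_eq_one fun p hp => if_pos (Nat.dvd_of_mem_primeFactors hp)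

lemma kloos_prime_mul_eq_kloosModel (hη : η ≠ 0) (hL : L ≠ 0) {p : ℕ} (hp : p.Prime)
    (hpL : ¬ p ∣ L) : kloos a b (p * L) = η * kloosModel a b L η (p * L) := by
  rw [(isMultiplicative_kloosModel a b η).map_mul_of_coprime
      ((hp.coprime_iff_not_dvd).mpr hpL), kloosModel_apply_self a b η hL,
    kloosModel_apply_prime a b η hp, if_neg hpL, mul_one, mul_inv_cancel_left₀ hη]

end kloosModel

lemma card_primeFactors_prime_mul {p L : ℕ} (hp : p.Prime) (hpL : ¬ p ∣ L) (hL : L ≠ 0) :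
    (p * L).primeFactors.card = L.primeFactors.card + 1 := by
  rw [Nat.primeFactors_mul hp.ne_zero hL, hp.primeFactors, Finset.card_union_of_disjoint
      (Finset.disjoint_singleton_left.mpr fun h => hpL (Nat.dvd_of_mem_primeFactors h)),
    Finset.card_singleton, add_comm]

lemma primesLe_div_le_ncard_add {L : ℕ} (hL : L ≠ 0) {X : ℝ} {S : Set ℕ} (hS : S.Finite)
    (hmaps : ∀ p : ℕ, p.Prime → ¬ p ∣ L → (p : ℝ) ≤ X / L → p * L ∈ S) :
    primesLe (X / L) ≤ S.ncard + L.primeFactors.card := by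
  set P := {p : ℕ | p.Prime ∧ (p : ℝ) ≤ X / L}
  calc primesLe (X / L) ≤ (P \ L.primeFactors).ncard + (L.primeFactors : Set ℕ).ncard :=
        Set.ncard_le_ncard_sdiff_add_ncard _ _
    _ ≤ S.ncard + L.primeFactors.card := by
        rw [Set.ncard_coe_finset]
        refine Nat.add_le_add_right (Set.ncard_le_ncard_of_injOn (· * L) (fun p hp => ?_)
          (fun p _ q _ h => Nat.eq_of_mul_eq_mul_right (Nat.pos_of_ne_zero hL) h) hS) _
        obtain ⟨⟨hp, hpX⟩, hpL⟩ := hp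
        exact hmaps p hp (fun h => hpL (Nat.mem_primeFactors.mpr ⟨hp, h, hL⟩)) hpX

theorem stmt2_general (a b : ℤ) (k : ℕ) (hk : 2 ≤ k)
    (η : ℂ) (hη : η ≠ 0) :
    ∃ f : ℕ → ℂ,
      (∀ m n : ℕ, Nat.Coprime m n → f (m * n) = f m * f n) ∧
      (∀ p : ℕ, p.Prime → p ∣ Lk k → f p = 1) ∧
      (∀ p : ℕ, p.Prime → ¬ p ∣ Lk k → f p = η⁻¹ * kloos a b (p * Lk k)) ∧
      ∀ X : ℝ, 1 ≤ X →
        (primesLe (X / (Lk k : ℝ)) : ℝ) - (k : ℝ) + 1 ≤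
          (Set.ncard {n : ℕ | (n : ℝ) ≤ X ∧ Squarefree n ∧ n.primeFactors.card = k ∧
              kloos a b n = η * f n} : ℝ) := by
  have hL : Lk k ≠ 0 := (squarefree_Lk k).ne_zero
  refine ⟨kloosModel a b (Lk k) η,
    fun m n => (isMultiplicative_kloosModel a b η).map_mul_of_coprime,
    fun p hp hpL => by rw [kloosModel_apply_prime a b η hp, if_pos hpL],
    fun p hp hpL => by rw [kloosModel_apply_prime a b η hp, if_neg hpL], fun X _ => ?_⟩
  set S := {n : ℕ | (n : ℝ) ≤ X ∧ Squarefree n ∧ n.primeFactors.card = k ∧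
      kloos a b n = η * kloosModel a b (Lk k) η n}
  have hS : S.Finite := (Set.finite_Iic ⌊X⌋₊).subset fun n hn => Nat.le_floor hn.1
  have hcount := primesLe_div_le_ncard_add hL hS fun p hp hpL hpX => show p * Lk k ∈ S from
    ⟨by push_cast; exact (le_div_iff₀ (by positivity)).mp hpX,
      (Nat.squarefree_mul ((hp.coprime_iff_not_dvd).mpr hpL)).mpr
        ⟨hp.prime.squarefree, squarefree_Lk k⟩,
      by rw [card_primeFactors_prime_mul hp hpL hL, card_primeFactors_Lk]; omega,
      kloos_prime_mul_eq_kloosModel a b η hη hL hp hpL⟩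
  rw [card_primeFactors_Lk] at hcount
  have hcast : ((k - 1 : ℕ) : ℝ) = k - 1 := by rw [Nat.cast_sub (by omega), Nat.cast_one]
  have hcountR := (Nat.cast_le (α := ℝ)).mpr hcount
  push_cast [hcast] at hcountR
  linarith

theorem stmt2 (a b : ℤ) (ha : a ≠ 0) (hb : b ≠ 0) (k : ℕ) (hk : 2 ≤ k)
    (η : ℂ) (hη : η ≠ 0) :
    ∃ f : ℕ → ℂ,
      (∀ m n : ℕ, Nat.Coprime m n → f (m * n) = f m * f n) ∧
      (∀ p : ℕ, p.Prime → p ∣ Lk k → f p = 1) ∧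
      (∀ p : ℕ, p.Prime → ¬ p ∣ Lk k → f p = η⁻¹ * kloos a b (p * Lk k)) ∧
      ∀ X : ℝ, 1 ≤ X →
        (primesLe (X / (Lk k : ℝ)) : ℝ) - (k : ℝ) + 1 ≤
          (Set.ncard {n : ℕ | (n : ℝ) ≤ X ∧ Squarefree n ∧ n.primeFactors.card = k ∧
              kloos a b n = η * f n} : ℝ) :=
  stmt2_general a b k hk η hη
end

section
/- Let S be a finite set with N elements, let t ≥ 2 and m ≥ 1 be integers, and let S₁, …, S_m be subsets of S such that the intersection of any t distinct ones among them contains at most one element (i.e., for any t distinct indices i₁, …, i_t in {1, …, m}, |S_{i₁} ∩ ⋯ ∩ S_{i_t}| ≤ 1). Then Σ_{i=1}^{m} |S_i| ≤ m + N·√(m(t−1)). -/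
theorem stmt7 {α : Type*} (S : Finset α) (N : ℕ) (hN : S.card = N)
    (t m : ℕ) (ht : 2 ≤ t) (hm : 1 ≤ m) (F : Fin m → Finset α)
    (hsub : ∀ i, F i ⊆ S)
    -- any `t` distinct ones among the `Sᵢ` intersect in at most one element
    (hint : ∀ I : Finset (Fin m), I.card = t → (⋂ i ∈ I, (F i : Set α)).Subsingleton) :
    ((∑ i, (F i).card : ℕ) : ℝ) ≤
      (m : ℝ) + (N : ℝ) * Real.sqrt ((m : ℝ) * ((t : ℝ) - 1)) := by
  classical
  -- Step 1: for any 2-element subset p of S, at most t-1 of the F i contain p.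
  have hpair : ∀ p ∈ S.powersetCard 2,
      (Finset.univ.filter (fun i : Fin m => p ⊆ F i)).card ≤ t - 1 := by
    intro p hp
    by_contra h
    push_neg at h
    have ht' : t ≤ (Finset.univ.filter (fun i : Fin m => p ⊆ F i)).card := by omega
    obtain ⟨I, hI, hIcard⟩ := Finset.exists_subset_card_eq ht'
    obtain ⟨x, y, hxy, hpxy⟩ := Finset.card_eq_two.mp (Finset.mem_powersetCard.mp hp).2
    have hmem : ∀ z ∈ p, z ∈ ⋂ i ∈ I, (F i : Set α) := by
      intro z hz
      simp only [Set.mem_iInter]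
      intro i hi
      exact (Finset.mem_filter.mp (hI hi)).2 hz
    have := hint I hIcard (hmem x (by simp [hpxy])) (hmem y (by simp [hpxy]))
    exact hxy this
  -- Step 2: double counting
  have hcount : ∑ i, ((F i).card.choose 2) ≤ N.choose 2 * (t - 1) := by
    have h1 : ∀ i, (F i).card.choose 2
        = ((S.powersetCard 2).filter (fun p => p ⊆ F i)).card := by
      intro i
      rw [← Finset.card_powersetCard]
      congr 1
      ext p
      simp only [Finset.mem_powersetCard, Finset.mem_filter]
      exact ⟨fun ⟨h1, h2⟩ => ⟨⟨h1.trans (hsub i), h2⟩, h1⟩, fun ⟨⟨_, h2⟩, h3⟩ => ⟨h3, h2⟩⟩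
    calc ∑ i, ((F i).card.choose 2)
        = ∑ i, ((S.powersetCard 2).filter (fun p => p ⊆ F i)).card := by
          simp_rw [h1]
      _ = ∑ p ∈ S.powersetCard 2, (Finset.univ.filter (fun i : Fin m => p ⊆ F i)).card := by
          simp_rw [Finset.card_filter]
          rw [Finset.sum_comm]
      _ ≤ ∑ _p ∈ S.powersetCard 2, (t - 1) := Finset.sum_le_sum hpair
      _ = N.choose 2 * (t - 1) := by
          rw [Finset.sum_const, Finset.card_powersetCard, hN, smul_eq_mul]
  -- pass to reals
  set A : ℝ := ((∑ i, (F i).card : ℕ) : ℝ) with hA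
  have hAsum : A = ∑ i, ((F i).card : ℝ) := by push_cast [hA]; ring
  have hchoose : ∀ k : ℕ, ((k.choose 2 : ℕ) : ℝ) = (k : ℝ) * ((k : ℝ) - 1) / 2 :=
    fun k => Nat.cast_choose_two (K := ℝ) k
  have hcountR : ∑ i, ((F i).card : ℝ) * (((F i).card : ℝ) - 1)
      ≤ (N : ℝ) * ((N : ℝ) - 1) * ((t : ℝ) - 1) := by
    have := hcount
    have hc : ((∑ i, ((F i).card.choose 2) : ℕ) : ℝ) ≤ ((N.choose 2 * (t - 1) : ℕ) : ℝ) := by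
      exact_mod_cast this
    push_cast at hc
    rw [hchoose] at hc
    simp_rw [hchoose] at hc
    have ht1 : ((t - 1 : ℕ) : ℝ) = (t : ℝ) - 1 := by
      have : (1 : ℕ) ≤ t := by omega
      push_cast [Nat.cast_sub this]
      ring
    rw [ht1] at hc
    rw [← Finset.sum_div] at hc
    linarith [hc]
  have hsq : ∑ i, ((F i).card : ℝ) ^ 2 ≤ A + (N : ℝ) ^ 2 * ((t : ℝ) - 1) := by
    have h2 : ∑ i, ((F i).card : ℝ) ^ 2
        = (∑ i, ((F i).card : ℝ) * (((F i).card : ℝ) - 1)) + A := by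
      rw [hAsum, ← Finset.sum_add_distrib]
      congr 1; ext i; ring
    have hN1 : (N : ℝ) * ((N : ℝ) - 1) * ((t : ℝ) - 1) ≤ (N : ℝ) ^ 2 * ((t : ℝ) - 1) := by
      have htpos : (0 : ℝ) ≤ (t : ℝ) - 1 := by
        have : (1 : ℝ) ≤ (t : ℝ) := by exact_mod_cast (by omega : 1 ≤ t)
        linarith
      nlinarith [Nat.cast_nonneg (α := ℝ) N]
    linarith [hcountR]
  -- Cauchy-Schwarz
  have hCS : A ^ 2 ≤ (m : ℝ) * ∑ i, ((F i).card : ℝ) ^ 2 := by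
    rw [hAsum]
    have := sq_sum_le_card_mul_sum_sq (s := (Finset.univ : Finset (Fin m)))
      (f := fun i => ((F i).card : ℝ))
    simpa using this
  have hkey : A ^ 2 ≤ (m : ℝ) * A + (m : ℝ) * ((N : ℝ) ^ 2 * ((t : ℝ) - 1)) := by
    have hmpos : (0 : ℝ) ≤ (m : ℝ) := Nat.cast_nonneg m
    have := mul_le_mul_of_nonneg_left hsq hmpos
    calc A ^ 2 ≤ (m : ℝ) * ∑ i, ((F i).card : ℝ) ^ 2 := hCS
      _ ≤ (m : ℝ) * (A + (N : ℝ) ^ 2 * ((t : ℝ) - 1)) := this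
      _ = (m : ℝ) * A + (m : ℝ) * ((N : ℝ) ^ 2 * ((t : ℝ) - 1)) := by ring
  -- final algebra
  have hA0 : 0 ≤ A := by rw [hAsum]; exact Finset.sum_nonneg fun i _ => Nat.cast_nonneg _
  have hsqrt : (0:ℝ) ≤ Real.sqrt ((m : ℝ) * ((t : ℝ) - 1)) := Real.sqrt_nonneg _
  by_cases hAm : A ≤ (m : ℝ)
  · have : (0:ℝ) ≤ (N : ℝ) * Real.sqrt ((m : ℝ) * ((t : ℝ) - 1)) := by positivity
    linarith
  · push_neg at hAm
    have h1 : (A - (m : ℝ)) ^ 2 ≤ (N : ℝ) ^ 2 * ((m : ℝ) * ((t : ℝ) - 1)) := by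
      have hmA : (m : ℝ) * (m : ℝ) ≤ (m : ℝ) * A :=
        mul_le_mul_of_nonneg_left hAm.le (Nat.cast_nonneg m)
      nlinarith [hkey, hmA]
    have h2 : A - (m : ℝ) ≤ (N : ℝ) * Real.sqrt ((m : ℝ) * ((t : ℝ) - 1)) := by
      calc A - (m : ℝ) = Real.sqrt ((A - (m : ℝ)) ^ 2) :=
            (Real.sqrt_sq (by linarith)).symm
        _ ≤ Real.sqrt ((N : ℝ) ^ 2 * ((m : ℝ) * ((t : ℝ) - 1))) := Real.sqrt_le_sqrt h1
        _ = (N : ℝ) * Real.sqrt ((m : ℝ) * ((t : ℝ) - 1)) := by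
            rw [Real.sqrt_mul (sq_nonneg _), Real.sqrt_sq (Nat.cast_nonneg N)]
    linarith
end

section
/- For all integers a, b and every squarefree positive integer n, the Kloosterman sum S(a,b;n) is nonzero. -/
/-!
Kloosterman sums are twisted-multiplicative: for coprime `m` and `n`, the Chinese remainder
theorem `ZMod (m * n) ≃+* ZMod m × ZMod n` splits a Kloosterman sum modulo `m * n` into the
product of a Kloosterman sum modulo `m` and one modulo `n`, taken with respect to other additive
characters. For squarefree moduli this reduces the claim to a prime modulus `p` and an arbitrary
additive character, where the sum consists of `p - 1` `p`-th roots of unity `ζ ^ kᵢ`. If it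
vanished, `Φ_p = minpoly ℤ ζ` would divide `∑ X ^ kᵢ` in `ℤ[X]`, and evaluating at `1`
(where `Φ_p(1) = p`) would give `p ∣ p - 1`.
-/

open Finset Polynomial

theorem IsPrimitiveRoot.sum_pow_ne_zero {K ι : Type*} [Field K] [CharZero K] {p : ℕ}
    [hp : Fact p.Prime] {ζ : K} (hζ : IsPrimitiveRoot ζ p) {s : Finset ι} (k : ι → ℕ)
    (hs : ¬ p ∣ #s) : ∑ i ∈ s, ζ ^ k i ≠ 0 := by
  intro hsum
  have hdvd : cyclotomic p ℤ ∣ ∑ i ∈ s, X ^ k i := by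
    rw [cyclotomic_eq_minpoly hζ hp.out.pos]
    exact minpoly.isIntegrallyClosed_dvd (hζ.isIntegral hp.out.pos) (by simpa using hsum)
  obtain ⟨q, hq⟩ := hdvd
  have hcard : (#s : ℤ) = p * q.eval 1 := by
    simpa [eval_finsetSum] using congrArg (eval 1) hq
  exact hs (Int.natCast_dvd_natCast.mp ⟨_, hcard⟩)

theorem IsPrimitiveRoot.sum_ne_zero_of_pow_eq_one {K ι : Type*} [Field K] [CharZero K] {p : ℕ}
    [Fact p.Prime] {ζ : K} (hζ : IsPrimitiveRoot ζ p) {s : Finset ι} {z : ι → K}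
    (hz : ∀ i ∈ s, z i ^ p = 1) (hs : ¬ p ∣ #s) : ∑ i ∈ s, z i ≠ 0 := by
  have : ∀ i ∈ s, ∃ k, ζ ^ k = z i :=
    fun i hi ↦ (hζ.eq_pow_of_pow_eq_one (hz i hi)).imp fun _ ↦ And.right
  choose! k hk using this
  rw [← sum_congr rfl hk]
  exact hζ.sum_pow_ne_zero k hs

noncomputable def kloostermanSum {R S : Type*} [CommRing R] [Fintype Rˣ] [CommRing S]
    (ψ : AddChar R S) (a b : R) : S :=
  ∑ x : Rˣ, ψ (a * x + b * ↑x⁻¹)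

theorem kloos_eq_kloostermanSum (a b : ℤ) (n : ℕ) [NeZero n] :
    kloos a b n = kloostermanSum ZMod.stdAddChar (a : ZMod n) b := by
  rw [kloos, ← sum_filter, kloostermanSum]
  symm
  refine sum_bij (fun u _ ↦ (u : ZMod n).val) (fun u _ ↦ ?_) (fun u _ v _ huv ↦ ?_)
    (fun x hx ↦ ?_) (fun u _ ↦ ?_)
  · exact mem_filter.mpr ⟨mem_range.mpr (ZMod.val_lt _), ZMod.val_coe_unit_coprime u⟩
  · exact Units.ext (ZMod.val_injective n huv)
  · obtain ⟨hxn, hcop⟩ := mem_filter.mp hx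
    exact ⟨ZMod.unitOfCoprime x hcop, mem_univ _, by simp [ZMod.val_cast_of_lt (mem_range.mp hxn)]⟩
  · have hinv : (((u : ZMod n).val : ZMod n))⁻¹ = ↑u⁻¹ := by
      rw [ZMod.natCast_zmod_val, ZMod.inv_coe_unit]
    have harg : (a : ZMod n) * u + b * ↑u⁻¹ =
        ((a * (u : ZMod n).val + b * (↑u⁻¹ : ZMod n).val : ℤ) : ZMod n) := by simp
    rw [hinv, harg, ZMod.stdAddChar_coe, eC]
    push_cast
    ring_nf

theorem kloostermanSum_eq_mul_of_ringEquiv {R R₁ R₂ S : Type*} [CommRing R] [CommRing R₁]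
    [CommRing R₂] [CommRing S] [Fintype Rˣ] [Fintype R₁ˣ] [Fintype R₂ˣ]
    (e : R ≃+* R₁ × R₂) (ψ : AddChar R S) (a b : R) :
    kloostermanSum ψ a b =
      kloostermanSum (ψ.compAddMonoidHom ((e.symm : R₁ × R₂ →+* R).toAddMonoidHom.comp
          (AddMonoidHom.inl R₁ R₂))) (e a).1 (e b).1 *
        kloostermanSum (ψ.compAddMonoidHom ((e.symm : R₁ × R₂ →+* R).toAddMonoidHom.comp
          (AddMonoidHom.inr R₁ R₂))) (e a).2 (e b).2 := by
  rw [kloostermanSum, kloostermanSum, kloostermanSum, sum_mul_sum, ← Fintype.sum_prod_type']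
  refine Fintype.sum_equiv ((Units.mapEquiv e.toMulEquiv).trans MulEquiv.prodUnits).toEquiv _ _
    fun x ↦ ?_
  simp only [AddChar.compAddMonoidHom_apply, AddMonoidHom.comp_apply, AddMonoidHom.inl_apply,
    AddMonoidHom.inr_apply, ← AddChar.map_add_eq_mul, ← map_add, Prod.mk_add_mk, add_zero, zero_add]
  congr 1
  show _ = e.symm _
  rw [e.eq_symm_apply]
  ext <;> simp [MulEquiv.prodUnits, ← map_inv]

theorem kloostermanSum_ne_zero_of_prime {p : ℕ} [Fact p.Prime] (ψ : AddChar (ZMod p) ℂ)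
    (a b : ZMod p) : kloostermanSum ψ a b ≠ 0 := by
  have hζ := Complex.isPrimitiveRoot_exp p (NeZero.ne p)
  refine hζ.sum_ne_zero_of_pow_eq_one (fun x _ ↦ ?_) ?_
  · rw [← AddChar.map_nsmul_eq_pow, nsmul_eq_mul, ZMod.natCast_self, zero_mul,
      AddChar.map_zero_eq_one]
  · rw [card_univ, ZMod.card_units, Nat.dvd_sub_iff_right (Fact.out : p.Prime).one_le dvd_rfl]
    exact (Fact.out : p.Prime).not_dvd_one

theorem kloostermanSum_ne_zero_of_squarefree {n : ℕ} [NeZero n] (hn : Squarefree n)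
    (ψ : AddChar (ZMod n) ℂ) (a b : ZMod n) : kloostermanSum ψ a b ≠ 0 := by
  -- The `Fintype` instance on `(ZMod n)ˣ` depends on `NeZero n`, so it joins the motive.
  revert ‹NeZero n› ψ a b
  induction n using Nat.recOnPosPrimePosCoprime with
  | zero => exact absurd hn not_squarefree_zero
  | one => intro _ ψ a b; simp [kloostermanSum, (ψ.val_isUnit _).ne_zero]
  | prime_pow p k hp hk =>
    obtain rfl : k = 1 := ((Nat.squarefree_pow_iff hp.one_lt.ne' hk.ne').mp hn).2
    have : Fact p.Prime := ⟨hp⟩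
    rw [pow_one]
    exact fun _ ↦ kloostermanSum_ne_zero_of_prime
  | coprime m n hm hn₁ hmn ihm ihn =>
    intro _ ψ a b
    have : NeZero m := ⟨by omega⟩
    have : NeZero n := ⟨by omega⟩
    rw [kloostermanSum_eq_mul_of_ringEquiv (ZMod.chineseRemainder hmn)]
    exact mul_ne_zero (ihm hn.of_mul_left _ _ _) (ihn hn.of_mul_right _ _ _)

theorem stmt8_general (a b : ℤ) (n : ℕ) (hsq : Squarefree n) :
    kloos a b n ≠ 0 := by
  have : NeZero n := ⟨hsq.ne_zero⟩
  rw [kloos_eq_kloostermanSum]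
  exact kloostermanSum_ne_zero_of_squarefree hsq _ _ _

theorem stmt8 (a b : ℤ) (n : ℕ) (hn : 0 < n) (hsq : Squarefree n) :
    kloos a b n ≠ 0 :=
  stmt8_general a b n hsq
end

section
/- Let p > 2 be a prime and let a, b be integers with gcd(ab, p) = 1 and a ≢ b (mod p). Then Kl(a,p) ≠ Kl(b,p). -/
open Finset Polynomial

section QuadraticChar

variable {F : Type*} [Field F] [Fintype F] [DecidableEq F]

lemma quadraticChar_sum_mul_sub (hF : ringChar F ≠ 2) {d : F} (hd : d ≠ 0) :
    ∑ t : F, quadraticChar F (t * (t - d)) = -1 := by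
  have hJ := jacobiSum_nontrivial_inv (quadraticChar_ne_one hF)
  rw [(quadraticChar_isQuadratic F).inv, jacobiSum] at hJ
  calc ∑ t : F, quadraticChar F (t * (t - d))
      = ∑ x : F, quadraticChar F (d * x * (d * x - d)) :=
        (Fintype.sum_equiv (Equiv.mulLeft₀ d hd) _ _ fun _ => rfl).symm
    _ = ∑ x : F, quadraticChar F (-1) * (quadraticChar F x * quadraticChar F (1 - x)) := by
        refine sum_congr rfl fun x _ => ?_
        rw [show d * x * (d * x - d) = d ^ 2 * (-1 * (x * (1 - x))) by ring, map_mul,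
          quadraticChar_sq_one' hd, one_mul, map_mul, map_mul]
    _ = -1 := by
        rw [← mul_sum, hJ, mul_neg, ← sq, quadraticChar_sq_one (neg_ne_zero.mpr one_ne_zero)]

lemma sum_comp_sq_eq_sum_quadraticChar_mul (hF : ringChar F ≠ 2) (f : F → ℤ) :
    ∑ y : F, f (y ^ 2) = ∑ t : F, (1 + quadraticChar F t) * f t := by
  rw [← sum_fiberwise' univ (· ^ 2) f]
  refine sum_congr rfl fun t _ => ?_
  rw [sum_const, nsmul_eq_mul, ← Set.toFinset_ofPred, quadraticChar_card_sqrts hF, add_comm]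

lemma quadraticChar_sum_sub (hF : ringChar F ≠ 2) (d : F) :
    ∑ t : F, quadraticChar F (t - d) = 0 :=
  (Fintype.sum_equiv (Equiv.subRight d) _ _ fun _ => rfl).trans (quadraticChar_sum_zero hF)

lemma quadraticChar_sum_sq_sub (hF : ringChar F ≠ 2) {d : F} (hd : d ≠ 0) :
    ∑ u : F, quadraticChar F (u ^ 2 - d) = -1 := by
  simp only [sum_comp_sq_eq_sum_quadraticChar_mul hF (fun t => quadraticChar F (t - d)),
    add_mul, one_mul, sum_add_distrib, quadraticChar_sum_sub hF, ← map_mul,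
    quadraticChar_sum_mul_sub hF hd, zero_add]

lemma quadraticChar_sum_sub_mul_sub (hF : ringChar F ≠ 2) {A B : F} (hAB : A ≠ B) :
    ∑ t : F, quadraticChar F ((t - A) * (t - B)) = -1 := by
  rw [← quadraticChar_sum_mul_sub hF (sub_ne_zero.mpr hAB)]
  exact Fintype.sum_equiv (Equiv.subRight B) _ _ fun t => by
    rw [Equiv.subRight_apply]; congr 1; ring

lemma quadraticChar_le_one (x : F) : quadraticChar F x ≤ 1 := by
  rcases eq_or_ne x 0 with rfl | hx
  · simp
  · rcases quadraticChar_dichotomy hx with h | h <;> simp [h]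

lemma eq_of_isSquare_of_quadraticChar_sq_sub_eq {A B : F}
    (h : ∀ y : F, quadraticChar F (y ^ 2 - A) = quadraticChar F (y ^ 2 - B)) (hA : IsSquare A) :
    A = B := by
  obtain ⟨s, rfl⟩ := hA
  have := h s
  rw [← sq, sub_self, quadraticChar_zero, eq_comm, quadraticChar_eq_zero_iff, sub_eq_zero] at this
  rwa [← sq]

lemma quadraticChar_sq_sub_injective (hF : ringChar F ≠ 2) :
    Function.Injective fun (A : F) (y : F) => quadraticChar F (y ^ 2 - A) := by
  intro A B hfun
  have h (y : F) : quadraticChar F (y ^ 2 - A) = quadraticChar F (y ^ 2 - B) := congrFun hfun y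
  by_cases hA : IsSquare A
  · exact eq_of_isSquare_of_quadraticChar_sq_sub_eq h hA
  by_cases hB : IsSquare B
  · exact (eq_of_isSquare_of_quadraticChar_sq_sub_eq (fun y => (h y).symm) hB).symm
  by_contra hAB
  have hprod : ∑ y : F, quadraticChar F ((y ^ 2 - A) * (y ^ 2 - B)) = Fintype.card F := by
    have : ∀ y : F, quadraticChar F ((y ^ 2 - A) * (y ^ 2 - B)) = 1 := fun y => by
      have hy : y ^ 2 - A ≠ 0 := fun hy => hA (sub_eq_zero.mp hy ▸ IsSquare.sq y)
      rw [map_mul, ← h y, ← sq, quadraticChar_sq_one hy]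
    simp [this]
  have hle : ∑ t : F, quadraticChar F t * quadraticChar F ((t - A) * (t - B)) ≤
      Fintype.card F := by
    simpa using sum_le_card_nsmul univ _ (1 : ℤ) fun t _ =>
      (map_mul (quadraticChar F) t _).symm ▸ quadraticChar_le_one _
  rw [sum_comp_sq_eq_sum_quadraticChar_mul hF fun t => quadraticChar F ((t - A) * (t - B))]
    at hprod
  simp only [add_mul, one_mul, sum_add_distrib, quadraticChar_sum_sub_mul_sub hF hAB] at hprod
  omega

lemma card_mul_add_inv_eq (hF : ringChar F ≠ 2) {A : F} (hA : A ≠ 0) (y : F) :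
    (#{x | x ≠ 0 ∧ A * x + x⁻¹ = y} : ℤ) = 1 + quadraticChar F (y ^ 2 - 4 * A) := by
  have h2A : 2 * A ≠ 0 := mul_ne_zero (Ring.two_ne_zero hF) hA
  have h4A : 2 * (2 * A) ≠ 0 := mul_ne_zero (Ring.two_ne_zero hF) h2A
  have hiff (x : F) : x ≠ 0 ∧ A * x + x⁻¹ = y ↔ (2 * A * x - y) ^ 2 = y ^ 2 - 4 * A := by
    constructor
    · rintro ⟨hx, rfl⟩
      field_simp
      ring
    · intro h
      have hq : 2 * (2 * A) * (A * x ^ 2 - y * x + 1) = 0 := by linear_combination h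
      replace hq := (mul_eq_zero.mp hq).resolve_left h4A
      have hx : x ≠ 0 := by
        rintro rfl
        simp at hq
      refine ⟨hx, ?_⟩
      field_simp
      linear_combination hq
  rw [card_equiv ((Equiv.mulLeft₀ (2 * A) h2A).trans (Equiv.subRight y))
    (t := {u | u ^ 2 = y ^ 2 - 4 * A}) (by simp [hiff]), ← Set.toFinset_ofPred,
    quadraticChar_card_sqrts hF, add_comm]

lemma sum_comp_mul_add_inv_eq {R : Type*} [AddCommGroup R] (hF : ringChar F ≠ 2) {A : F}
    (hA : A ≠ 0) (g : F → R) :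
    ∑ x with x ≠ 0, g (A * x + x⁻¹) =
      ∑ y, (1 + quadraticChar F (y ^ 2 - 4 * A)) • g y := by
  rw [← sum_fiberwise' _ (fun x => A * x + x⁻¹) g]
  refine sum_congr rfl fun y _ => ?_
  rw [sum_const, filter_filter, ← card_mul_add_inv_eq hF hA, natCast_zsmul]

end QuadraticChar

section PrimitiveRoot

variable {p : ℕ} [hp : Fact p.Prime] {K : Type*} [Field K] [CharZero K]

lemma IsPrimitiveRoot.eq_zero_of_aeval_eq_zero {ζ : K} (hζ : IsPrimitiveRoot ζ p) {P : ℚ[X]}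
    (hdeg : P.natDegree < p) (hP1 : P.eval 1 = 0) (hζP : aeval ζ P = 0) : P = 0 := by
  by_contra hP
  obtain ⟨Q, rfl⟩ : cyclotomic p ℚ ∣ P := by
    rw [cyclotomic_eq_minpoly_rat hζ hp.out.pos]
    exact minpoly.dvd ℚ ζ hζP
  have hQ : Q ≠ 0 := right_ne_zero_of_mul hP
  rw [natDegree_mul (cyclotomic_ne_zero p ℚ) hQ, natDegree_cyclotomic,
    Nat.totient_prime hp.out] at hdeg
  rw [eq_C_of_natDegree_eq_zero (by omega : Q.natDegree = 0), eval_mul,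
    eval_one_cyclotomic_prime, eval_C, mul_eq_zero, Nat.cast_eq_zero] at hP1
  rcases hP1 with h | h
  · exact hp.out.ne_zero h
  · exact hQ (by rw [eq_C_of_natDegree_eq_zero (by omega : Q.natDegree = 0), h, C_0])

lemma AddChar.eq_zero_of_sum_zsmul_eq_zero {ψ : AddChar (ZMod p) K} (hψ : ψ ≠ 1)
    {c : ZMod p → ℤ} (hc : ∑ y, c y = 0) (h : ∑ y, c y • ψ y = 0) : c = 0 := by
  have hζ : IsPrimitiveRoot (ψ 1) p := by
    refine IsPrimitiveRoot.iff_orderOf.mpr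
      (orderOf_eq_prime ?_ ((zmod_char_ne_one_iff p ψ).mp hψ))
    rw [← map_nsmul_eq_pow, nsmul_eq_mul, mul_one, ZMod.natCast_self, map_zero_eq_one]
  set P : ℚ[X] := ∑ y : ZMod p, C (c y : ℚ) * X ^ y.val
  have hcoeff : ∀ y : ZMod p, P.coeff y.val = c y := by
    intro y
    simp [P, finsetSum_coeff, (ZMod.val_injective p).eq_iff]
  have hP : P = 0 := by
    refine hζ.eq_zero_of_aeval_eq_zero ?_ ?_ ?_
    · refine (natDegree_sum_le_of_forall_le _ _ fun y _ => ?_).trans_lt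
        (Nat.sub_lt hp.out.pos one_pos)
      exact (natDegree_C_mul_X_pow_le _ _).trans (Nat.le_sub_one_of_lt (ZMod.val_lt y))
    · simp [P, eval_finsetSum]
      exact_mod_cast hc
    · rw [← h, map_sum]
      refine sum_congr rfl fun y _ => ?_
      rw [map_mul, map_pow, aeval_X, ← map_nsmul_eq_pow, nsmul_one, ZMod.natCast_zmod_val,
        aeval_C, zsmul_eq_mul, map_intCast]
  ext y
  simpa [hP] using (hcoeff y).symm

end PrimitiveRoot

lemma eC_intCast_div (m : ℤ) (N : ℕ) [NeZero N] :
    eC (m / N) = ZMod.stdAddChar (m : ZMod N) := by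
  rw [ZMod.stdAddChar_coe, eC, mul_div_assoc]

lemma kloos_eq_sum_stdAddChar (p : ℕ) [Fact p.Prime] (a : ℤ) :
    kloos a 1 p = ∑ x : ZMod p with x ≠ 0, ZMod.stdAddChar ((a : ZMod p) * x + x⁻¹) := by
  rw [kloos, sum_filter]
  refine sum_nbij' (fun x : ℕ => (x : ZMod p)) ZMod.val (fun _ _ => mem_univ _)
    (fun y _ => mem_range.mpr (ZMod.val_lt y))
    (fun x hx => ZMod.val_cast_of_lt (mem_range.mp hx)) (fun y _ => ZMod.natCast_zmod_val y)
    fun x _ => ?_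
  have hunit : Nat.gcd x p = 1 ↔ (x : ZMod p) ≠ 0 :=
    (ZMod.isUnit_iff_coprime x p).symm.trans isUnit_iff_ne_zero
  simp only [hunit]
  split_ifs
  · rw [show (a : ℂ) * x + ((1 : ℤ) : ℂ) * (((x : ZMod p)⁻¹).val : ℂ)
        = ((a * x + ((x : ZMod p)⁻¹).val : ℤ) : ℂ) by push_cast; ring, eC_intCast_div _ p]
    push_cast
    rw [ZMod.natCast_zmod_val]
  · rfl

lemma ZMod.stdAddChar_ne_one (p : ℕ) [Fact p.Prime] :
    (ZMod.stdAddChar : AddChar (ZMod p) ℂ) ≠ 1 := by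
  simpa using ZMod.isPrimitive_stdAddChar p (a := 1) one_ne_zero

lemma kloos_eq_sum_quadraticChar {p : ℕ} [Fact p.Prime] (hF : ringChar (ZMod p) ≠ 2) {a : ℤ}
    (ha : (a : ZMod p) ≠ 0) :
    kloos a 1 p = ∑ y : ZMod p, quadraticChar (ZMod p) (y ^ 2 - 4 * a) • ZMod.stdAddChar y := by
  rw [kloos_eq_sum_stdAddChar, sum_comp_mul_add_inv_eq hF ha]
  simp only [add_zsmul, one_zsmul, sum_add_distrib]
  rw [AddChar.sum_eq_zero_iff_ne_zero.mpr (ZMod.stdAddChar_ne_one p), zero_add]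

lemma ZMod.intCast_ne_zero_of_gcd_eq_one {p : ℕ} (hp : p ≠ 1) {m : ℤ}
    (hm : Int.gcd m p = 1) : (m : ZMod p) ≠ 0 := by
  rw [ne_eq, ZMod.intCast_zmod_eq_zero_iff_dvd]
  intro h
  have := Int.dvd_gcd h dvd_rfl
  rw [hm] at this
  exact hp (Nat.dvd_one.mp this)

theorem stmt10 (p : ℕ) (hp : p.Prime) (hp2 : 2 < p) (a b : ℤ)
    (hco : Int.gcd (a * b) p = 1) (hab : ¬ a ≡ b [ZMOD (p : ℤ)]) :
    kloos a 1 p ≠ kloos b 1 p := by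
  have := Fact.mk hp
  have hF : ringChar (ZMod p) ≠ 2 := by rw [ZMod.ringChar_zmod_n]; omega
  obtain ⟨ha, hb⟩ : (a : ZMod p) ≠ 0 ∧ (b : ZMod p) ≠ 0 := by
    rw [← mul_ne_zero_iff, ← Int.cast_mul]
    exact ZMod.intCast_ne_zero_of_gcd_eq_one hp.ne_one hco
  have h4 : (4 : ZMod p) ≠ 0 := by
    rw [show (4 : ZMod p) = 2 ^ 2 by norm_num]
    exact pow_ne_zero 2 (Ring.two_ne_zero hF)
  intro h
  rw [kloos_eq_sum_quadraticChar hF ha, kloos_eq_sum_quadraticChar hF hb, ← sub_eq_zero,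
    ← sum_sub_distrib] at h
  simp_rw [← sub_smul] at h
  have hχ := AddChar.eq_zero_of_sum_zsmul_eq_zero (ZMod.stdAddChar_ne_one p)
    (by rw [sum_sub_distrib, quadraticChar_sum_sq_sub hF (mul_ne_zero h4 ha),
      quadraticChar_sum_sq_sub hF (mul_ne_zero h4 hb), sub_self]) h
  have h4ab : 4 * (a : ZMod p) = 4 * b :=
    quadraticChar_sq_sub_injective hF (funext fun y => sub_eq_zero.mp (congrFun hχ y))
  exact hab ((ZMod.intCast_eq_intCast_iff a b p).mp (mul_left_cancel₀ h4 h4ab))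
end

section
/- There exists an absolute constant C > 0 such that for every real X ≥ 3 and every integer k with k ≥ √(log X)/3, the number π_k(X) of squarefree integers ≤ X with exactly k prime factors satisfies π_k(X) ≤ C·(X/log X)·e^{−√(log X)}. -/
/-!
A squarefree `n` with `k` prime factors satisfies `1 / n = ∏_{p ∣ n} 1 / p`, and each set of `k`
primes occurs `k!` times in the expansion of `S ^ k`, where `S = ∑_{p ≤ X} 1 / p`; hence
`π_k(X) ≤ X ∑ 1 / n ≤ X S ^ k / k! ≤ X (e S / k) ^ k`.
Legendre's formula for `N!` together with Chebyshev's bound `θ(N) ≤ N log 4` gives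
`∑_{p ≤ N} log p / p ≤ log N + log 4`; applied to the blocks `2 ^ 2 ^ j ≤ p < 2 ^ 2 ^ (j + 1)`
it bounds each block of `S` by `4`, so `S = O(log log X)`. Once `k ≥ √(log X) / 3` the base
`e S / k` is eventually below `e⁻⁴`, and `e^{-4k} ≤ e^{-√(log X)} / log X`; the remaining
bounded range of `log X` is absorbed into the constant.
-/

open Finset Real Filter
open scoped Nat

theorem factorial_mul_sum_prod_powersetCard_le {α R : Type*} [CommSemiring R]
    [PartialOrder R] [IsOrderedRing R] (s : Finset α) (f : α → R) (hf : ∀ i ∈ s, 0 ≤ f i)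
    (k : ℕ) : (k ! : R) * ∑ A ∈ s.powersetCard k, ∏ i ∈ A, f i ≤ (∑ i ∈ s, f i) ^ k := by
  classical
  -- In the multinomial expansion of `(∑ f) ^ k`, the exponent vector `ind A` of a `k`-subset `A`
  -- carries the coefficient `k !`.
  let ind : Finset α → α → ℕ := fun A i => if i ∈ A then 1 else 0
  have hind : ∀ A ∈ s.powersetCard k, ind A ∈ piAntidiag s k := by
    intro A hA
    obtain ⟨hAs, hAk⟩ := mem_powersetCard.1 hA
    simp only [mem_piAntidiag, ind, sum_boole, ne_eq, ite_eq_right_iff, one_ne_zero, imp_false,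
      not_not, Nat.cast_id, filter_mem_eq_inter, inter_eq_right.2 hAs, hAk]
    exact ⟨trivial, fun i hi => hAs hi⟩
  have hterm : ∀ A ∈ s.powersetCard k,
      (k ! : R) * ∏ i ∈ A, f i = Nat.multinomial s (ind A) * ∏ i ∈ s, f i ^ ind A i := by
    intro A hA
    obtain ⟨hAs, -⟩ := mem_powersetCard.1 hA
    have hsum := (mem_piAntidiag.1 (hind A hA)).1
    congr 1
    · rw [Nat.multinomial, hsum, prod_eq_one fun i _ => by by_cases hi : i ∈ A <;> simp [ind, hi]]
      simp
    · simp [ind, pow_ite, prod_ite_mem, inter_eq_right.2 hAs]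
  have hinj : Set.InjOn ind (s.powersetCard k) := by
    intro A _ B _ h
    ext i
    have hi := congrFun h i
    by_cases hA : i ∈ A <;> by_cases hB : i ∈ B <;> simp_all [ind]
  rw [sum_pow_eq_sum_piAntidiag, mul_sum, sum_congr rfl hterm,
    ← sum_image (f := fun g => (Nat.multinomial s g : R) * ∏ i ∈ s, f i ^ g i) hinj]
  refine sum_le_sum_of_subset_of_nonneg (image_subset_iff.2 hind) fun g hg _ => ?_
  exact mul_nonneg (Nat.cast_nonneg _) (prod_nonneg fun i hi => pow_nonneg (hf i hi) _)

theorem sum_primesLE_div_mul_log_le_log_factorial (N : ℕ) :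
    ∑ p ∈ Nat.primesLE N, ((N / p : ℕ) : ℝ) * log p ≤ log (N ! : ℝ) := by
  have hsupp : (N !).factorization.support ⊆ Nat.primesLE N := fun p hp => by
    rw [Nat.support_factorization] at hp
    exact Nat.mem_primesLE.2 ⟨(Nat.Prime.dvd_factorial (Nat.prime_of_mem_primeFactors hp)).1
      (Nat.dvd_of_mem_primeFactors hp), Nat.prime_of_mem_primeFactors hp⟩
  rw [log_nat_eq_sum_factorization, Finsupp.sum_of_support_subset _ hsupp _ (by simp)]
  refine sum_le_sum fun p hp => ?_
  have hprime := Nat.prime_of_mem_primesLE hp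
  have hlog : 1 ≤ Nat.log p N :=
    Nat.le_log_of_pow_le hprime.one_lt (by simpa using Nat.le_of_mem_primesLE hp)
  have hdiv : N / p ≤ (N !).factorization p := by
    rw [Nat.factorization_factorial hprime (Nat.lt_succ_self _)]
    simpa using single_le_sum (f := fun i => N / p ^ i) (fun _ _ => Nat.zero_le _)
      (mem_Ico.2 ⟨le_rfl, Nat.lt_succ_of_le hlog⟩)
  gcongr

theorem sum_primesLE_log_div_le (N : ℕ) : ∑ p ∈ Nat.primesLE N, log p / p ≤ log N + log 4 := by
  rcases N.eq_zero_or_pos with rfl | hN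
  · simp [Nat.primesLE_zero]; positivity
  have hN' : (0 : ℝ) < N := by exact_mod_cast hN
  have hfloor : ∀ p ∈ Nat.primesLE N, (N : ℝ) * (log p / p) ≤ ((N / p : ℕ) + 1) * log p := by
    intro p hp
    have hlog : 0 ≤ log p := log_nonneg (by exact_mod_cast (Nat.one_lt_of_mem_primesLE hp).le)
    calc (N : ℝ) * (log p / p) = N / p * log p := by ring
      _ ≤ ((N / p : ℕ) + 1) * log p := by
        gcongr
        rw [← Nat.floor_div_eq_div (K := ℝ)]
        exact (Nat.lt_floor_add_one _).le
  have htheta : ∑ p ∈ Nat.primesLE N, log p ≤ N * log 4 := by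
    rw [← Chebyshev.theta_eq_sum_primesLE_log, mul_comm]
    exact Chebyshev.theta_le_log4_mul_x hN'.le
  have hfact : log (N ! : ℝ) ≤ N * log N := by
    rw [← log_pow]
    exact log_le_log (by positivity) (by exact_mod_cast Nat.factorial_le_pow N)
  refine le_of_mul_le_mul_left ?_ hN'
  calc (N : ℝ) * ∑ p ∈ Nat.primesLE N, log p / p
      ≤ ∑ p ∈ Nat.primesLE N, ((N / p : ℕ) + 1) * log p := by
        rw [mul_sum]; exact sum_le_sum hfloor
    _ = ∑ p ∈ Nat.primesLE N, ((N / p : ℕ) : ℝ) * log p + ∑ p ∈ Nat.primesLE N, log p := by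
        rw [← sum_add_distrib]; simp only [add_mul, one_mul]
    _ ≤ N * log N + N * log 4 :=
        add_le_add ((sum_primesLE_div_mul_log_le_log_factorial N).trans hfact) htheta
    _ = N * (log N + log 4) := by ring

theorem sum_inv_primesBelow_two_pow_two_pow_filter_le (j : ℕ) :
    ∑ p ∈ (Nat.primesBelow (2 ^ 2 ^ (j + 1))).filter (2 ^ 2 ^ j ≤ ·), (p : ℝ)⁻¹ ≤ 4 := by
  have hlog2 : 0 < log 2 := log_pos one_lt_two
  set c : ℝ := 2 ^ j * log 2
  have hc : 0 < c := by positivity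
  have hterm : ∀ p ∈ (Nat.primesBelow (2 ^ 2 ^ (j + 1))).filter (2 ^ 2 ^ j ≤ ·),
      (p : ℝ)⁻¹ ≤ c⁻¹ * (log p / p) := by
    intro p hp
    obtain ⟨-, hjp⟩ := mem_filter.1 hp
    have hcp : c ≤ log p := by
      calc c = log ((2 : ℝ) ^ 2 ^ j) := by rw [log_pow]; push_cast; rfl
        _ ≤ log p := log_le_log (by positivity) (by exact_mod_cast hjp)
    calc (p : ℝ)⁻¹ = c⁻¹ * (c / p) := by field_simp
      _ ≤ c⁻¹ * (log p / p) := by gcongr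
  calc ∑ p ∈ (Nat.primesBelow (2 ^ 2 ^ (j + 1))).filter (2 ^ 2 ^ j ≤ ·), (p : ℝ)⁻¹
      ≤ c⁻¹ * ∑ p ∈ Nat.primesLE (2 ^ 2 ^ (j + 1)), log p / p := by
        rw [mul_sum]
        refine (sum_le_sum hterm).trans (sum_le_sum_of_subset_of_nonneg ?_ fun p _ _ => ?_)
        · exact (filter_subset _ _).trans (Nat.primesBelow_mono (Nat.le_succ _))
        · have := log_natCast_nonneg p
          positivity
    _ ≤ c⁻¹ * (log (2 ^ 2 ^ (j + 1) : ℕ) + log 4) := by gcongr; exact sum_primesLE_log_div_le _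
    _ = 2 + 2 / 2 ^ j := by
        rw [show (4 : ℝ) = 2 ^ 2 by norm_num]
        push_cast
        simp only [log_pow, c]
        push_cast
        field_simp
        ring
    _ ≤ 4 := by linarith [div_le_self zero_le_two (one_le_pow₀ one_le_two : (1 : ℝ) ≤ 2 ^ j)]

theorem sum_inv_primesBelow_two_pow_two_pow_le (J : ℕ) :
    ∑ p ∈ Nat.primesBelow (2 ^ 2 ^ J), (p : ℝ)⁻¹ ≤ 4 * J := by
  induction J with
  | zero => simp
  | succ J ih =>
    rw [← sum_filter_add_sum_filter_not _ (2 ^ 2 ^ J ≤ ·), Nat.cast_succ, mul_add_one, add_comm]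
    refine add_le_add ((sum_le_sum_of_subset_of_nonneg ?_ fun _ _ _ => by positivity).trans ih)
      (sum_inv_primesBelow_two_pow_two_pow_filter_le J)
    intro p hp
    simp only [mem_filter, not_le, Nat.mem_primesBelow] at hp ⊢
    exact ⟨hp.2, hp.1.2⟩

theorem sum_inv_primesLE_le (N : ℕ) :
    ∑ p ∈ Nat.primesLE N, (p : ℝ)⁻¹ ≤ 4 * (Nat.log 2 (Nat.log 2 N) + 1) := by
  have hN : N + 1 ≤ 2 ^ 2 ^ (Nat.log 2 (Nat.log 2 N) + 1) :=
    (Nat.lt_pow_succ_log_self one_lt_two N).trans_le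
      (Nat.pow_le_pow_right two_pos (Nat.lt_pow_succ_log_self one_lt_two _))
  exact_mod_cast (sum_le_sum_of_subset_of_nonneg (Nat.primesBelow_mono hN)
    fun _ _ _ => by positivity).trans (sum_inv_primesBelow_two_pow_two_pow_le _)

theorem one_le_log_of_three_le {X : ℝ} (hX : 3 ≤ X) : 1 ≤ log X := by
  rw [le_log_iff_exp_le (by linarith)]
  linarith [exp_one_lt_d9]

theorem sum_inv_primesLE_floor_le {X : ℝ} (hX : 3 ≤ X) :
    ∑ p ∈ Nat.primesLE ⌊X⌋₊, (p : ℝ)⁻¹ ≤ 8 * log (log X) + 8 := by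
  set a := Nat.log 2 ⌊X⌋₊
  have hL := one_le_log_of_three_le hX
  have hLL : 0 ≤ log (log X) := log_nonneg hL
  have hlog2 : 1 / 2 < log 2 := by linarith [log_two_gt_d9]
  have ha : 0 < a := Nat.log_pos one_lt_two (Nat.le_floor (by norm_num; linarith))
  have haX : (a : ℝ) ≤ 2 * log X := by
    calc (a : ℝ) ≤ logb 2 ⌊X⌋₊ := natLog_le_logb _ _
      _ ≤ logb 2 X := logb_le_logb_of_le one_lt_two
          (by exact_mod_cast Nat.floor_pos.2 (by linarith)) (Nat.floor_le (by linarith))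
      _ = log X / log 2 := rfl
      _ ≤ 2 * log X := by rw [div_le_iff₀ (by linarith)]; nlinarith
  have hJ : (Nat.log 2 a : ℝ) ≤ 1 + 2 * log (log X) := by
    calc (Nat.log 2 a : ℝ) ≤ log a / log 2 := natLog_le_logb _ _
      _ ≤ log (2 * log X) / log 2 := by gcongr
      _ = 1 + log (log X) / log 2 := by
          rw [log_mul two_ne_zero (by linarith), add_div, div_self (by linarith)]
      _ ≤ 1 + 2 * log (log X) := by
          gcongr
          rw [div_le_iff₀ (by linarith)]; nlinarith
  linarith [sum_inv_primesLE_le ⌊X⌋₊]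

def squarefreeOmegaLE (N k : ℕ) : Finset ℕ :=
  {n ∈ Icc 1 N | Squarefree n ∧ n.primeFactors.card = k}

theorem ncard_setOf_squarefree_eq_card_squarefreeOmegaLE {X : ℝ} (hX : 0 ≤ X) (k : ℕ) :
    Set.ncard {n : ℕ | (n : ℝ) ≤ X ∧ Squarefree n ∧ n.primeFactors.card = k} =
      (squarefreeOmegaLE ⌊X⌋₊ k).card := by
  rw [← Set.ncard_coe_finset]
  congr 1
  ext n
  simp only [squarefreeOmegaLE, coe_filter, mem_Icc, Set.mem_ofPred_eq, Nat.le_floor_iff hX]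
  exact ⟨fun h => ⟨⟨Nat.one_le_iff_ne_zero.2 h.2.1.ne_zero, h.1⟩, h.2⟩, fun h => ⟨h.1.2, h.2⟩⟩

theorem card_squarefreeOmegaLE_le_self (N k : ℕ) : (squarefreeOmegaLE N k).card ≤ N :=
  (card_filter_le _ _).trans (by simp)

theorem factorial_mul_sum_inv_squarefreeOmegaLE_le (N k : ℕ) :
    (k ! : ℝ) * ∑ n ∈ squarefreeOmegaLE N k, (n : ℝ)⁻¹ ≤
      (∑ p ∈ Nat.primesLE N, (p : ℝ)⁻¹) ^ k := by
  refine le_trans ?_ (factorial_mul_sum_prod_powersetCard_le _ _ (fun p _ => by positivity) k)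
  have hmem : ∀ n ∈ squarefreeOmegaLE N k, n ≤ N ∧ Squarefree n ∧ n.primeFactors.card = k :=
    fun n hn => by simp_all [squarefreeOmegaLE]
  have hinj : Set.InjOn Nat.primeFactors (squarefreeOmegaLE N k) := fun m hm n hn h => by
    rw [← Nat.prod_primeFactors_of_squarefree (hmem m hm).2.1,
      ← Nat.prod_primeFactors_of_squarefree (hmem n hn).2.1, h]
  have hmaps : ∀ n ∈ squarefreeOmegaLE N k, n.primeFactors ∈ (Nat.primesLE N).powersetCard k := by
    intro n hn
    obtain ⟨hnN, -, hk⟩ := hmem n hn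
    refine mem_powersetCard.2 ⟨fun p hp => ?_, hk⟩
    exact Nat.mem_primesLE.2
      ⟨(Nat.le_of_mem_primeFactors hp).trans hnN, Nat.prime_of_mem_primeFactors hp⟩
  gcongr
  calc ∑ n ∈ squarefreeOmegaLE N k, (n : ℝ)⁻¹
      = ∑ n ∈ squarefreeOmegaLE N k, ∏ p ∈ n.primeFactors, (p : ℝ)⁻¹ := by
        refine sum_congr rfl fun n hn => ?_
        rw [prod_inv_distrib, ← Nat.cast_prod, Nat.prod_primeFactors_of_squarefree (hmem n hn).2.1]
    _ = ∑ A ∈ (squarefreeOmegaLE N k).image Nat.primeFactors, ∏ p ∈ A, (p : ℝ)⁻¹ :=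
        (sum_image (f := fun A : Finset ℕ => ∏ p ∈ A, (p : ℝ)⁻¹) hinj).symm
    _ ≤ _ := sum_le_sum_of_subset_of_nonneg (image_subset_iff.2 hmaps)
        fun A _ _ => prod_nonneg fun p _ => by positivity

theorem card_squarefreeOmegaLE_le (N k : ℕ) :
    ((squarefreeOmegaLE N k).card : ℝ) ≤ N * ((∑ p ∈ Nat.primesLE N, (p : ℝ)⁻¹) ^ k / k !) := by
  have hterm : ∀ n ∈ squarefreeOmegaLE N k, (1 : ℝ) ≤ N * (n : ℝ)⁻¹ := by
    intro n hn
    simp only [squarefreeOmegaLE, mem_filter, mem_Icc] at hn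
    rw [← div_eq_mul_inv, one_le_div (by exact_mod_cast hn.1.1)]
    exact_mod_cast hn.1.2
  calc ((squarefreeOmegaLE N k).card : ℝ) ≤ N * ∑ n ∈ squarefreeOmegaLE N k, (n : ℝ)⁻¹ := by
        rw [mul_sum, card_eq_sum_ones, Nat.cast_sum, Nat.cast_one]
        exact sum_le_sum hterm
    _ ≤ _ := by
        gcongr
        rw [le_div_iff₀ (by positivity), mul_comm]
        exact factorial_mul_sum_inv_squarefreeOmegaLE_le N k

theorem pow_div_factorial_le {x : ℝ} (hx : 0 ≤ x) (k : ℕ) : x ^ k / k ! ≤ (exp 1 * x / k) ^ k := by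
  rcases k.eq_zero_or_pos with rfl | hk
  · simp
  have hk' : (0 : ℝ) < k := by exact_mod_cast hk
  calc x ^ k / k ! = (x / k) ^ k * ((k : ℝ) ^ k / k !) := by
        rw [div_pow]; field_simp
    _ ≤ (x / k) ^ k * exp 1 ^ k := by
        rw [exp_one_pow]; gcongr; exact pow_div_factorial_le_exp _ hk'.le k
    _ = (exp 1 * x / k) ^ k := by rw [← mul_pow]; ring

theorem eventually_pow_le_exp_neg_sqrt_div :
    ∀ᶠ L : ℝ in atTop, ∀ k : ℕ, √L / 3 ≤ k →
      (exp 1 * (8 * log L + 8) / k) ^ k ≤ exp (-√L) / L := by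
  -- `c` is small enough for `e (8 log L + 8) / k ≤ 27 e c ≤ e⁻⁴` and `log L ≤ √L / 3`.
  set c : ℝ := exp (-5) / 30
  have hc : 0 < c := by positivity
  have hlog : ∀ᶠ L : ℝ in atTop, log L ≤ c * √L := by
    filter_upwards [(isLittleO_log_rpow_atTop one_half_pos).bound hc, eventually_ge_atTop 1]
      with L hL hL1
    rwa [norm_of_nonneg (log_nonneg hL1), norm_of_nonneg (by positivity), ← sqrt_eq_rpow] at hL
  have hconst : ∀ᶠ L : ℝ in atTop, 8 ≤ c * √L := by
    filter_upwards [tendsto_sqrt_atTop.eventually_ge_atTop (8 / c)] with L hL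
    rwa [div_le_iff₀ hc, mul_comm] at hL
  filter_upwards [hlog, hconst, eventually_ge_atTop 1] with L hlogL hconstL hL1 k hk
  have hL : 0 < L := by linarith
  have hlogL0 := log_nonneg hL1
  have hsqrt : 0 < √L := sqrt_pos.2 hL
  have hk0 : (0 : ℝ) < k := by linarith
  have hc1 : c ≤ 1 / 3 := by
    have : exp (-5) ≤ 1 := exp_le_one_iff.2 (by norm_num)
    simp only [c]; linarith
  have hbase : exp 1 * (8 * log L + 8) / k ≤ exp (-4) := by
    rw [div_le_iff₀ hk0]
    calc exp 1 * (8 * log L + 8) ≤ exp 1 * (27 * c * k) := by gcongr; nlinarith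
      _ = 27 / 30 * exp (-4) * k := by
          simp only [c]; rw [show (-4 : ℝ) = 1 + -5 by norm_num, exp_add]; ring
      _ ≤ exp (-4) * k := by gcongr; exact mul_le_of_le_one_left (exp_pos _).le (by norm_num)
  calc (exp 1 * (8 * log L + 8) / k) ^ k ≤ exp (-4) ^ k := by gcongr
    _ = exp (-(4 * k)) := by rw [← exp_nat_mul]; ring_nf
    _ ≤ exp (-√L - log L) := by gcongr; nlinarith
    _ = exp (-√L) / L := by rw [exp_sub, exp_log hL]

theorem card_squarefreeOmegaLE_floor_le {X : ℝ} (hX : 3 ≤ X) (k : ℕ) :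
    ((squarefreeOmegaLE ⌊X⌋₊ k).card : ℝ) ≤ X * (exp 1 * (8 * log (log X) + 8) / k) ^ k := by
  calc ((squarefreeOmegaLE ⌊X⌋₊ k).card : ℝ)
      ≤ ⌊X⌋₊ * ((∑ p ∈ Nat.primesLE ⌊X⌋₊, (p : ℝ)⁻¹) ^ k / k !) := card_squarefreeOmegaLE_le _ k
    _ ≤ X * (exp 1 * (8 * log (log X) + 8) / k) ^ k := by
        gcongr
        · exact Nat.floor_le (by linarith)
        refine (pow_div_factorial_le (by positivity) k).trans ?_
        gcongr
        exact sum_inv_primesLE_floor_le hX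

theorem stmt15 :
    ∃ C : ℝ, 0 < C ∧ ∀ X : ℝ, 3 ≤ X → ∀ k : ℕ,
      Real.sqrt (Real.log X) / 3 ≤ (k : ℝ) →
      (Set.ncard {n : ℕ | (n : ℝ) ≤ X ∧ Squarefree n ∧ n.primeFactors.card = k} : ℝ) ≤
        C * (X / Real.log X) * Real.exp (-Real.sqrt (Real.log X)) := by
  obtain ⟨L₀, hL₀⟩ := eventually_atTop.1
    (eventually_pow_le_exp_neg_sqrt_div.and (eventually_ge_atTop 0))
  have hL₀0 : 0 ≤ L₀ := (hL₀ L₀ le_rfl).2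
  refine ⟨L₀ * exp √L₀ + 1, by positivity, fun X hX k hk => ?_⟩
  have hL := one_le_log_of_three_le hX
  rw [ncard_setOf_squarefree_eq_card_squarefreeOmegaLE (by linarith), mul_assoc]
  rcases le_total (log X) L₀ with hsmall | hlarge
  · calc ((squarefreeOmegaLE ⌊X⌋₊ k).card : ℝ) ≤ X :=
          (Nat.cast_le.2 (card_squarefreeOmegaLE_le_self _ _)).trans (Nat.floor_le (by linarith))
      _ = log X * exp √(log X) * (X / log X * exp (-√(log X))) := by
          rw [exp_neg]; field_simp
      _ ≤ _ := by
          gcongr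
          calc log X * exp √(log X) ≤ L₀ * exp √L₀ := by gcongr
            _ ≤ L₀ * exp √L₀ + 1 := le_add_of_nonneg_right zero_le_one
  · calc ((squarefreeOmegaLE ⌊X⌋₊ k).card : ℝ)
        ≤ X * (exp 1 * (8 * log (log X) + 8) / k) ^ k := card_squarefreeOmegaLE_floor_le hX k
      _ ≤ X * (exp (-√(log X)) / log X) := by gcongr; exact (hL₀ _ hlarge).1 k hk
      _ = 1 * (X / log X * exp (-√(log X))) := by ring
      _ ≤ _ := by gcongr; exact le_add_of_nonneg_left (by positivity)
end

section
/- Let p ≥ 7 be a prime and let a, b, t be integers with gcd(p, abt) = 1. Then the Birch sum B(at, bt; p) is nonzero; moreover, if B(a,b;p)/B(at,bt;p) is a rational number, then t ≡ 1 (mod p) or t ≡ −1 (mod p). -/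
/-- The Birch sum `B(a,b;c) = Σ_{x mod c} e((a x³ + b x)/c)`. -/
noncomputable def birch (a b : ℤ) (c : ℕ) : ℂ :=
  ∑ x ∈ Finset.range c, eC (((a : ℂ) * (x : ℂ) ^ 3 + (b : ℂ) * (x : ℂ)) / (c : ℂ))

/-!
Write `ζ = e(1/p)`, so that `B(u,v;p) = ∑_y ζ ^ (u y³ + v y)` with exponents in `ZMod p`.
A relation `m B(a,b;p) = n B(a',b';p)` with `m, n ∈ ℤ` is a `ℤ`-linear relation among the powers
of `ζ` with coefficients `m · #{y | a y³ + b y = x} - n · #{y | a' y³ + b' y = x}`; as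
`Φ_p = 1 + X + ⋯ + X ^ (p - 1)` is the minimal polynomial of `ζ`, these coefficients are all equal.
Pairing them with `x ^ k` and using `∑_x x ^ k = 0` for `k < p - 1` gives
`m S_k(a,b) = n S_k(a',b')` in `ZMod p`, where `S_k(A,B) = ∑_y (A y³ + B y) ^ k`.
Now `S_k(at,bt) = t ^ k S_k(a,b)`, and `S_k`, `S_(k+2)` are nonzero for `k = 2 ⌈(p - 1)/6⌉`
(one binomial term survives), so `B(at,bt;p) = 0` is impossible and a rational ratio forces
`t ^ k = t ^ (k + 2)`, i.e. `t² = 1`.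
-/

open Finset

theorem FiniteField.sum_pow_of_ne_zero {K : Type*} [Field K] [Fintype K] {m : ℕ} (hm : m ≠ 0) :
    ∑ x : K, x ^ m = if Fintype.card K - 1 ∣ m then -1 else 0 := by
  classical
  rw [← FiniteField.sum_pow_units K m, ← Finset.sum_filter_of_ne (p := (· ≠ 0)) (by simp_all),
    Finset.sum_subtype (univ.filter (· ≠ 0)) (p := (· ≠ 0)) (by simp)]
  exact Fintype.sum_equiv unitsEquivNeZero.symm _ _ (fun _ => rfl)

theorem Fintype.sum_card_fiber_mul {ι κ R : Type*} [Fintype ι] [Fintype κ] [DecidableEq κ]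
    [NonAssocSemiring R] (f : ι → κ) (F : κ → R) :
    ∑ x, ((univ.filter fun i => f i = x).card : R) * F x = ∑ i, F (f i) := by
  rw [← Finset.sum_fiberwise' univ f F]
  simp only [sum_const, nsmul_eq_mul]

open Polynomial in
theorem IsPrimitiveRoot.eq_of_sum_mul_pow_val_eq_zero {K : Type*} [Field K] [CharZero K]
    {p : ℕ} [Fact p.Prime] {ζ : K} (hζ : IsPrimitiveRoot ζ p) {c : ZMod p → ℤ}
    (h : ∑ x, (c x : K) * ζ ^ x.val = 0) (x y : ZMod p) : c x = c y := by
  have hp : 0 < p := (Fact.out : p.Prime).pos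
  set Q : ℤ[X] := ∑ x, C (c x) * X ^ x.val
  have hcoeff : ∀ x : ZMod p, Q.coeff x.val = c x := fun x => by
    simp [Q, ZMod.val_injective p |>.eq_iff]
  have hdeg : Q.natDegree ≤ p - 1 := natDegree_sum_le_of_forall_le _ _ fun x _ =>
    (natDegree_C_mul_X_pow_le _ _).trans (Nat.le_sub_one_of_lt (ZMod.val_lt x))
  obtain ⟨R, hR⟩ : cyclotomic p ℤ ∣ Q := by
    rw [cyclotomic_eq_minpoly hζ hp]
    exact minpoly.isIntegrallyClosed_dvd (hζ.isIntegral hp) (by simpa [Q] using h)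
  have hRC : R = C (R.coeff 0) := by
    refine eq_C_of_natDegree_eq_zero ?_
    rcases eq_or_ne R 0 with rfl | hR0
    · simp
    have := (cyclotomic.monic p ℤ).natDegree_mul' hR0
    rw [← hR, natDegree_cyclotomic, Nat.totient_prime Fact.out] at this
    omega
  have hconst : ∀ x : ZMod p, c x = R.coeff 0 := fun x => by
    rw [← hcoeff, hR, hRC, coeff_mul_C, cyclotomic_prime, finsetSum_coeff,
      sum_eq_single x.val (fun _ _ h => by simp [coeff_X_pow, Ne.symm h]) (by simp [ZMod.val_lt])]
    simp
  rw [hconst, hconst]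

theorem IsPrimitiveRoot.mul_sum_pow_eq_of_mul_sum_pow_val_eq {K ι : Type*} [Field K] [CharZero K]
    [Fintype ι] {p : ℕ} [Fact p.Prime] {ζ : K} (hζ : IsPrimitiveRoot ζ p) {f g : ι → ZMod p}
    {m n : ℤ} (h : (m : K) * ∑ i, ζ ^ (f i).val = n * ∑ i, ζ ^ (g i).val) {k : ℕ}
    (hk : k < p - 1) :
    (m : ZMod p) * ∑ i, f i ^ k = n * ∑ i, g i ^ k := by
  classical
  set c : ZMod p → ℤ := fun x =>
    m * (univ.filter fun i => f i = x).card - n * (univ.filter fun i => g i = x).card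
  have hcK : ∑ x, (c x : K) * ζ ^ x.val = m * ∑ i, ζ ^ (f i).val - n * ∑ i, ζ ^ (g i).val := by
    simp only [c, Int.cast_sub, Int.cast_mul, Int.cast_natCast, sub_mul, mul_assoc,
      sum_sub_distrib, ← mul_sum, Fintype.sum_card_fiber_mul]
  have hcZ : ∑ x, (c x : ZMod p) * x ^ k = m * ∑ i, f i ^ k - n * ∑ i, g i ^ k := by
    simp only [c, Int.cast_sub, Int.cast_mul, Int.cast_natCast, sub_mul, mul_assoc,
      sum_sub_distrib, ← mul_sum, Fintype.sum_card_fiber_mul]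
  have hconst := hζ.eq_of_sum_mul_pow_val_eq_zero (c := c) (by rw [hcK, h, sub_self])
  rw [← sub_eq_zero, ← hcZ, Fintype.sum_congr _ _ fun x => by rw [hconst x 0], ← mul_sum,
    FiniteField.sum_pow_lt_card_sub_one _ _ (by rwa [ZMod.card]), mul_zero]

theorem eC_intCast_div_s16 (p : ℕ) [NeZero p] (m : ℤ) :
    eC (m / p) = Complex.exp (2 * Real.pi * Complex.I / p) ^ (m : ZMod p).val := by
  have hζ := Complex.isPrimitiveRoot_exp p (NeZero.ne p)
  calc eC (m / p) = Complex.exp (2 * Real.pi * Complex.I / p) ^ m := by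
        rw [eC, ← Complex.exp_int_mul]
        ring_nf
    _ = Complex.exp (2 * Real.pi * Complex.I / p) ^ (m % p) := by
        conv_lhs => rw [← Int.mul_ediv_add_emod m p]
        rw [zpow_add₀ (Complex.exp_ne_zero _), zpow_mul, zpow_natCast, hζ.pow_eq_one, one_zpow,
          one_mul]
    _ = _ := by rw [← ZMod.val_intCast, zpow_natCast]

theorem ZMod.sum_range_natCast {M : Type*} [AddCommMonoid M] (p : ℕ) [NeZero p]
    (F : ZMod p → M) : ∑ x ∈ range p, F x = ∑ y, F y :=
  sum_nbij' (fun x => x) ZMod.val (fun _ _ => mem_univ _) (fun y _ => mem_range.2 y.val_lt)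
    (fun _ hx => ZMod.val_cast_of_lt (mem_range.1 hx)) (fun y _ => ZMod.natCast_zmod_val y)
    fun _ _ => rfl

theorem birch_eq_sum_zmod (p : ℕ) [NeZero p] (a b : ℤ) :
    birch a b p = ∑ y : ZMod p,
      Complex.exp (2 * Real.pi * Complex.I / p) ^ ((a : ZMod p) * y ^ 3 + b * y).val := by
  rw [birch, ← ZMod.sum_range_natCast p]
  refine sum_congr rfl fun x _ => ?_
  have h := eC_intCast_div_s16 p (a * (x : ℤ) ^ 3 + b * x)
  push_cast at h
  exact h

def cubicPowerSum {R : Type*} [CommSemiring R] [Fintype R] (A B : R) (k : ℕ) : R :=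
  ∑ y, (A * y ^ 3 + B * y) ^ k

theorem cubicPowerSum_mul_mul {R : Type*} [CommSemiring R] [Fintype R] (A B T : R) (k : ℕ) :
    cubicPowerSum (A * T) (B * T) k = T ^ k * cubicPowerSum A B k := by
  simp only [cubicPowerSum, mul_sum, ← mul_pow]
  exact sum_congr rfl fun y _ => by ring

theorem cubicPowerSum_eq_sum_choose {R : Type*} [CommSemiring R] [Fintype R] (A B : R) (k : ℕ) :
    cubicPowerSum A B k =
      ∑ i ∈ range (k + 1), k.choose i * A ^ i * B ^ (k - i) * ∑ y : R, y ^ (2 * i + k) := by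
  simp only [cubicPowerSum, add_pow, mul_sum]
  rw [sum_comm]
  refine sum_congr rfl fun i hi => sum_congr rfl fun y _ => ?_
  obtain ⟨l, rfl⟩ := Nat.exists_eq_add_of_le (Nat.lt_succ_iff.mp (mem_range.mp hi))
  rw [Nat.add_sub_cancel_left, show 2 * i + (i + l) = 3 * i + l by omega, pow_add, pow_mul]
  ring

theorem Nat.Prime.not_dvd_choose_of_lt {p n k : ℕ} (hp : p.Prime) (hkn : k ≤ n) (hn : n < p) :
    ¬p ∣ n.choose k := fun hdvd => by
  have := (hdvd.mul_right k.factorial).mul_right (n - k).factorial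
  rw [Nat.choose_mul_factorial_mul_factorial hkn, hp.dvd_factorial] at this
  omega

theorem cubicPowerSum_ne_zero {p : ℕ} [Fact p.Prime] {A B : ZMod p} (hA : A ≠ 0) (hB : B ≠ 0)
    {i k : ℕ} (hik : i ≤ k) (hki : k < 4 * i) (hp : 2 * i + k = p - 1) :
    cubicPowerSum A B k ≠ 0 := by
  have hsum : ∀ j ≤ k, ∑ y : ZMod p, y ^ (2 * j + k) = if j = i then -1 else 0 := fun j hj => by
    rw [FiniteField.sum_pow_of_ne_zero (by omega), ZMod.card]
    refine if_congr ⟨fun ⟨c, hc⟩ => ?_, fun h => ⟨1, by omega⟩⟩ rfl rfl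
    have : c < 2 := by nlinarith
    interval_cases c <;> omega
  rw [cubicPowerSum_eq_sum_choose, sum_eq_single i
      (fun j hj hji => by rw [hsum j (Nat.lt_succ_iff.mp (mem_range.mp hj)), if_neg hji, mul_zero])
      (fun h => absurd (mem_range.mpr (by omega)) h), hsum i hik, if_pos rfl]
  have hchoose : (k.choose i : ZMod p) ≠ 0 := by
    rw [Ne, ZMod.natCast_eq_zero_iff]
    exact (Fact.out : p.Prime).not_dvd_choose_of_lt hik (by omega)
  simp [hchoose, hA, hB]

/-- The binomial terms with `y⁶` and `y¹²` survive, giving `-A (A³ + 4 B³)`,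
nonzero as `3` is not a cube mod `7`. -/
theorem cubicPowerSum_four_ne_zero_zmod_seven :
    ∀ A B : ZMod 7, A ≠ 0 → B ≠ 0 → cubicPowerSum A B 4 ≠ 0 := by
  unfold cubicPowerSum
  decide

theorem exists_cubicPowerSum_ne_zero {p : ℕ} [Fact p.Prime] (hp7 : 7 ≤ p) :
    ∃ k, k + 2 < p - 1 ∧ ∀ A B : ZMod p, A ≠ 0 → B ≠ 0 →
      cubicPowerSum A B k ≠ 0 ∧ cubicPowerSum A B (k + 2) ≠ 0 := by
  have hp6 : p % 6 = 1 ∨ p % 6 = 5 := by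
    have h2 := (Fact.out : p.Prime).eq_one_or_self_of_dvd 2
    have h3 := (Fact.out : p.Prime).eq_one_or_self_of_dvd 3
    omega
  refine ⟨2 * ((p + 4) / 6), by omega, fun A B hA hB => ⟨?_, ?_⟩⟩
  · exact cubicPowerSum_ne_zero hA hB (i := (p - 1 - 2 * ((p + 4) / 6)) / 2) (by omega) (by omega)
      (by omega)
  · rcases eq_or_ne p 7 with rfl | hp
    · exact cubicPowerSum_four_ne_zero_zmod_seven A B hA hB
    · exact cubicPowerSum_ne_zero hA hB (i := (p - 3 - 2 * ((p + 4) / 6)) / 2) (by omega)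
        (by omega) (by omega)

theorem intCast_mul_cubicPowerSum_eq_of_mul_birch_eq {p : ℕ} [Fact p.Prime] {a b a' b' m n : ℤ}
    (h : (m : ℂ) * birch a b p = n * birch a' b' p) {k : ℕ} (hk : k < p - 1) :
    (m : ZMod p) * cubicPowerSum (a : ZMod p) b k = n * cubicPowerSum (a' : ZMod p) b' k := by
  have hp := (Fact.out : p.Prime).ne_zero
  have : NeZero p := ⟨hp⟩
  rw [birch_eq_sum_zmod, birch_eq_sum_zmod] at h
  exact (Complex.isPrimitiveRoot_exp p hp).mul_sum_pow_eq_of_mul_sum_pow_val_eq h hk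

theorem Rat.intCast_den_ne_zero_of_intCast_num_eq_zero {p : ℕ} [Fact p.Prime] (r : ℚ)
    (h : (r.num : ZMod p) = 0) : (r.den : ZMod p) ≠ 0 := fun hd => by
  rw [ZMod.intCast_zmod_eq_zero_iff_dvd, Int.ofNat_dvd_left] at h
  rw [ZMod.natCast_eq_zero_iff] at hd
  exact (Fact.out : p.Prime).one_lt.ne' (Nat.eq_one_of_dvd_one (r.reduced ▸ Nat.dvd_gcd h hd))

theorem ZMod.intCast_ne_zero_of_gcd_eq_one_s16 {p : ℕ} [Fact p.Prime] {x : ℤ}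
    (h : Int.gcd x p = 1) : (x : ZMod p) ≠ 0 := fun hx => by
  rw [ZMod.intCast_zmod_eq_zero_iff_dvd] at hx
  have := Int.dvd_gcd hx (dvd_refl (p : ℤ))
  rw [h] at this
  exact (Fact.out : p.Prime).one_lt.ne' (Nat.eq_one_of_dvd_one (mod_cast this))

theorem Rat.den_mul_eq_num_mul_of_div_eq {K : Type*} [Field K] [CharZero K] {x y : K} {r : ℚ}
    (hy : y ≠ 0) (h : x / y = r) : ((r.den : ℤ) : K) * x = (r.num : ℤ) * y := by
  rw [div_eq_iff hy, Rat.cast_def] at h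
  rw [h, Int.cast_natCast]
  field_simp

theorem Int.modEq_one_or_modEq_neg_one_of_sq_eq_one {p : ℕ} [Fact p.Prime] {t : ℤ}
    (h : (t : ZMod p) ^ 2 = 1) : t ≡ 1 [ZMOD p] ∨ t ≡ -1 [ZMOD p] := by
  simp only [← ZMod.intCast_eq_intCast_iff, Int.cast_one, Int.cast_neg]
  exact sq_eq_one_iff.mp h

theorem stmt16 (p : ℕ) (hp : p.Prime) (hp7 : 7 ≤ p) (a b t : ℤ)
    (h : Int.gcd (a * b * t) p = 1) :
    birch (a * t) (b * t) p ≠ 0 ∧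
      ((∃ r : ℚ, birch a b p / birch (a * t) (b * t) p = (r : ℂ)) →
        (t ≡ 1 [ZMOD (p : ℤ)] ∨ t ≡ -1 [ZMOD (p : ℤ)])) := by
  have : Fact p.Prime := ⟨hp⟩
  obtain ⟨⟨hA, hB⟩, hT⟩ : ((a : ZMod p) ≠ 0 ∧ (b : ZMod p) ≠ 0) ∧ (t : ZMod p) ≠ 0 := by
    simpa only [Int.cast_mul, mul_ne_zero_iff] using ZMod.intCast_ne_zero_of_gcd_eq_one_s16 h
  obtain ⟨k, hk, hS⟩ := exists_cubicPowerSum_ne_zero (p := p) hp7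
  obtain ⟨hSk, hSk2⟩ := hS a b hA hB
  have hpowerSum : ∀ {m n : ℤ}, (m : ℂ) * birch a b p = n * birch (a * t) (b * t) p →
      ∀ j < p - 1,
      (m : ZMod p) * cubicPowerSum (a : ZMod p) b j = n * t ^ j * cubicPowerSum (a : ZMod p) b j :=
    fun hmn j hj => by
      rw [intCast_mul_cubicPowerSum_eq_of_mul_birch_eq hmn hj, Int.cast_mul, Int.cast_mul,
        cubicPowerSum_mul_mul, mul_assoc]
  have hne : birch (a * t) (b * t) p ≠ 0 := fun h0 => by
    simpa [hT, hSk] using hpowerSum (m := 0) (n := 1) (by simp [h0]) k (by omega)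
  refine ⟨hne, fun ⟨r, hr⟩ => ?_⟩
  have hrel := Rat.den_mul_eq_num_mul_of_div_eq hne hr
  have h1 := mul_right_cancel₀ hSk (hpowerSum hrel k (by omega))
  have h2 := mul_right_cancel₀ hSk2 (hpowerSum hrel (k + 2) hk)
  have hnum : (r.num : ZMod p) ≠ 0 := fun h0 =>
    r.intCast_den_ne_zero_of_intCast_num_eq_zero h0 (by simpa [h0] using h1)
  have ht2 : (t : ZMod p) ^ 2 = 1 := by
    rw [h1, pow_add] at h2
    exact mul_left_cancel₀ (mul_ne_zero hnum (pow_ne_zero k hT)) (by linear_combination -h2)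
  exact Int.modEq_one_or_modEq_neg_one_of_sq_eq_one ht2
end
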